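/- For every z ∈ ℂ∖[−1,1], (1/π) ∫_{−1}^{1} log|t−z| / √(1−t²) dt = −log|J₊⁻¹(z)| − log 2. -/

import Mathlib

/-!
Put `w = J₊⁻¹(z)`, `a = (z+1)^{1/2}` and `b = (z-1)^{1/2}`. Then `w = (a-b)²/2` and
`w⁻¹ = 2z - w = (a+b)²/2`. The principal branch halves arguments, and `arg (z+1)` and `arg (z-1)`
differ by less than `π` off `[-1,1]`, so `Re (a b̄) > 0`, i.e. `|a-b| < |a+b|`, whence `|w| < 1`.

After the substitution `t = cos θ`, the relation `w + w⁻¹ = 2z` gives the factorization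
`2w (cos θ - z) = -(e^{iθ} - w)(e^{-iθ} - w)`, so the integral splits into
`∫₀^π log|e^{iθ} - w| + ∫₀^π log|e^{-iθ} - w| - π log (2|w|)`. The first two terms together are
the integral of `log|ζ - w|` over the whole unit circle, which vanishes for `|w| < 1`.
-/

open MeasureTheory Filter Set

/-- The inverse Joukowsky transform mapping the slit plane to the unit disk,
`J₊⁻¹(z) = z - (z-1)^{1/2} (z+1)^{1/2}` with principal-branch square roots. -/
noncomputable def Jinv (z : ℂ) : ℂ :=
  z - (z - 1) ^ ((1 : ℂ) / 2) * (z + 1) ^ ((1 : ℂ) / 2)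

namespace Complex

open Real ComplexConjugate

theorem cpow_half_mul_self (x : ℂ) : x ^ ((1 : ℂ) / 2) * x ^ ((1 : ℂ) / 2) = x := by
  rw [← sq, one_div]
  exact_mod_cast cpow_nat_inv_pow x two_ne_zero

theorem re_cpow_half_mul_conj_cpow_half_pos {u v : ℂ} (hu : u ≠ 0) (hv : v ≠ 0)
    (h : |arg u - arg v| < π) :
    0 < (u ^ ((1 : ℂ) / 2) * conj (v ^ ((1 : ℂ) / 2))).re := by
  rw [cpow_def_of_ne_zero hu, cpow_def_of_ne_zero hv, ← exp_conj, ← Complex.exp_add, exp_re]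
  refine mul_pos (Real.exp_pos _) (cos_pos_of_mem_Ioo ?_)
  rw [abs_lt] at h
  simp only [add_im, conj_im, mul_im, log_im, log_re]
  norm_num
  constructor <;> linarith

theorem norm_sub_lt_norm_add_of_re_mul_conj_pos {a b : ℂ} (h : 0 < (a * conj b).re) :
    ‖a - b‖ < ‖a + b‖ := by
  rw [← sq_lt_sq₀ (norm_nonneg _) (norm_nonneg _), ← normSq_eq_norm_sq, ← normSq_eq_norm_sq,
    normSq_add, normSq_sub]
  linarith

theorem abs_arg_add_one_sub_arg_sub_one_lt_pi {z : ℂ} (hz : z ∉ ofReal '' Icc (-1 : ℝ) 1) :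
    |arg (z + 1) - arg (z - 1)| < π := by
  rcases lt_trichotomy z.im 0 with him | him | him
  · have h₁ := neg_pi_lt_arg (z + 1)
    have h₂ := neg_pi_lt_arg (z - 1)
    have h₃ : arg (z + 1) < 0 := arg_neg_iff.2 (by simpa using him)
    have h₄ : arg (z - 1) < 0 := arg_neg_iff.2 (by simpa using him)
    rw [abs_sub_lt_iff]
    constructor <;> linarith
  · have hz_real : z = (z.re : ℂ) := ext rfl (by simpa using him)
    have hz_out : z.re < -1 ∨ 1 < z.re := by
      by_contra! h
      exact hz ⟨z.re, h, hz_real.symm⟩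
    rw [hz_real, ← ofReal_one, ← ofReal_add, ← ofReal_sub]
    rcases hz_out with h | h
    · rw [arg_ofReal_of_neg (by linarith), arg_ofReal_of_neg (by linarith)]
      simp [pi_pos]
    · rw [arg_ofReal_of_nonneg (by linarith), arg_ofReal_of_nonneg (by linarith)]
      simp [pi_pos]
  · have h₁ : 0 ≤ arg (z + 1) := arg_nonneg_iff.2 (by simpa using him.le)
    have h₂ : 0 ≤ arg (z - 1) := arg_nonneg_iff.2 (by simpa using him.le)
    have h₃ : arg (z + 1) < π := arg_lt_pi_iff.2 (Or.inr (by simpa using him.ne'))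
    have h₄ : arg (z - 1) < π := arg_lt_pi_iff.2 (Or.inr (by simpa using him.ne'))
    rw [abs_sub_lt_iff]
    constructor <;> linarith

end Complex

section Joukowsky

open Complex ComplexConjugate

theorem Jinv_mul_two_mul_sub_Jinv (z : ℂ) : Jinv z * (2 * z - Jinv z) = 1 := by
  unfold Jinv
  linear_combination -(z + 1) ^ ((1 : ℂ) / 2) * (z + 1) ^ ((1 : ℂ) / 2) * cpow_half_mul_self (z - 1)
    - (z - 1) * cpow_half_mul_self (z + 1)

theorem Jinv_ne_zero (z : ℂ) : Jinv z ≠ 0 :=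
  left_ne_zero_of_mul_eq_one (Jinv_mul_two_mul_sub_Jinv z)

theorem Jinv_add_inv (z : ℂ) : Jinv z + (Jinv z)⁻¹ = 2 * z := by
  rw [← eq_inv_of_mul_eq_one_right (Jinv_mul_two_mul_sub_Jinv z)]
  ring

theorem norm_Jinv_lt_one {z : ℂ} (hz : z ∉ ofReal '' Icc (-1 : ℝ) 1) : ‖Jinv z‖ < 1 := by
  set a := (z + 1) ^ ((1 : ℂ) / 2)
  set b := (z - 1) ^ ((1 : ℂ) / 2)
  have hJ : Jinv z = (a - b) ^ 2 / 2 := by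
    unfold Jinv
    linear_combination (-1 / 2 : ℂ) * (cpow_half_mul_self (z + 1) + cpow_half_mul_self (z - 1))
  have hJ_inv : 2 * z - Jinv z = (a + b) ^ 2 / 2 := by
    rw [hJ]
    linear_combination (-1 : ℂ) * (cpow_half_mul_self (z + 1) + cpow_half_mul_self (z - 1))
  have hre : 0 < (a * conj b).re := by
    refine re_cpow_half_mul_conj_cpow_half_pos ?_ ?_ (abs_arg_add_one_sub_arg_sub_one_lt_pi hz)
    · exact fun h => hz ⟨-1, by norm_num, by push_cast; linear_combination -h⟩
    · exact fun h => hz ⟨1, by norm_num, by push_cast; linear_combination -h⟩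
  have hlt : ‖Jinv z‖ < ‖2 * z - Jinv z‖ := by
    have := norm_sub_lt_norm_add_of_re_mul_conj_pos hre
    rw [hJ_inv, hJ, norm_div, norm_div, norm_pow, norm_pow, Complex.norm_two]
    gcongr
  have hmul := congrArg (‖·‖) (Jinv_mul_two_mul_sub_Jinv z)
  simp only [norm_mul, norm_one] at hmul
  nlinarith [norm_nonneg (Jinv z)]

end Joukowsky

section LogIntegral

open Real

theorem integral_div_sqrt_one_sub_sq_eq_integral_comp_cos (f : ℝ → ℝ) :
    ∫ t in (-1 : ℝ)..1, f t / √(1 - t ^ 2) = ∫ θ in 0..π, f (cos θ) := by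
  rw [intervalIntegral.integral_of_le (by norm_num), ← integral_Icc_eq_integral_Ioc,
    ← bijOn_cos.image_eq, integral_image_eq_integral_abs_deriv_smul measurableSet_Icc
      (fun θ _ => (Real.hasDerivAt_cos θ).hasDerivWithinAt) injOn_cos,
    intervalIntegral.integral_of_le pi_pos.le, integral_Icc_eq_integral_Ioo,
    integral_Ioc_eq_integral_Ioo]
  refine setIntegral_congr_fun measurableSet_Ioo fun θ hθ => ?_
  have hsin : 0 < sin θ := sin_pos_of_pos_of_lt_pi hθ.1 hθ.2
  have hsqrt : √(1 - cos θ ^ 2) = sin θ := by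
    rw [← Real.sin_sq, sqrt_sq hsin.le]
  rw [smul_eq_mul, abs_neg, abs_of_pos hsin, hsqrt]
  field_simp

theorem log_norm_cos_sub_joukowsky {z w : ℂ} (hw₀ : w ≠ 0) (hw : ‖w‖ ≠ 1)
    (hzw : w + w⁻¹ = 2 * z) (θ : ℝ) :
    log ‖(cos θ : ℂ) - z‖
      = log ‖circleMap 0 1 θ - w‖ + log ‖circleMap 0 1 (-θ) - w‖ - log 2 - log ‖w‖ := by
  have hfactor : 2 * w * ((cos θ : ℂ) - z)
      = -((circleMap 0 1 θ - w) * (circleMap 0 1 (-θ) - w)) := by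
    have hexp : Complex.exp (θ * Complex.I) * Complex.exp (-(θ * Complex.I)) = 1 := by
      rw [← Complex.exp_add, add_neg_cancel, Complex.exp_zero]
    simp only [circleMap, Complex.ofReal_cos, Complex.cos, Complex.ofReal_one, one_mul, zero_add,
      Complex.ofReal_neg, neg_mul]
    field_simp
    linear_combination hexp + w * hzw - mul_inv_cancel₀ hw₀
  have hne : ∀ φ : ℝ, circleMap 0 1 φ - w ≠ 0 := fun φ h => by
    apply hw
    rw [← sub_eq_zero.1 h, norm_circleMap_zero, abs_one]
  have hX : (cos θ : ℂ) - z ≠ 0 := fun h => by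
    rw [h, mul_zero, eq_comm, neg_eq_zero] at hfactor
    exact mul_ne_zero (hne θ) (hne (-θ)) hfactor
  have hlog := congrArg (fun x => log ‖x‖) hfactor
  simp only [norm_mul, norm_neg, Complex.norm_two] at hlog
  rw [log_mul (by positivity) (by positivity), log_mul two_ne_zero (by positivity),
    log_mul (by simpa using hne θ) (by simpa using hne (-θ))] at hlog
  linarith

theorem integral_log_norm_cos_sub_joukowsky {z w : ℂ} (hw₀ : w ≠ 0) (hw : ‖w‖ < 1)
    (hzw : w + w⁻¹ = 2 * z) :
    ∫ θ in 0..π, log ‖(cos θ : ℂ) - z‖ = -π * (log 2 + log ‖w‖) := by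
  set g : ℝ → ℝ := fun θ => log ‖circleMap 0 1 θ - w‖
  have hg : Continuous g := by
    refine Continuous.log (by fun_prop) fun θ => norm_ne_zero_iff.2 fun h => hw.ne ?_
    rw [← sub_eq_zero.1 h, norm_circleMap_zero, abs_one]
  have hg_neg : Continuous fun θ => g (-θ) := hg.comp continuous_neg
  have hcircle : ∫ θ in 0..2 * π, g θ = 0 := by
    simpa [circleAverage_def, pi_ne_zero] using circleAverage_log_norm_sub_const₀ hw
  have hhalves : (∫ θ in 0..π, g θ) + ∫ θ in 0..π, g (-θ) = 0 := by
    have hperiod : Function.Periodic g (2 * π) := fun θ => by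
      simp only [g, periodic_circleMap 0 1 θ]
    rw [intervalIntegral.integral_comp_neg, neg_zero, add_comm,
      intervalIntegral.integral_add_adjacent_intervals (hg.intervalIntegrable _ _)
        (hg.intervalIntegrable _ _), ← hcircle]
    convert hperiod.intervalIntegral_add_eq (-π) 0 using 1 <;> ring_nf
  calc ∫ θ in 0..π, log ‖(cos θ : ℂ) - z‖
      = ∫ θ in 0..π, (g θ + g (-θ) - (log 2 + log ‖w‖)) :=
        intervalIntegral.integral_congr fun θ _ => by
          rw [log_norm_cos_sub_joukowsky hw₀ hw.ne hzw θ]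
          ring
    _ = -π * (log 2 + log ‖w‖) := by
      rw [intervalIntegral.integral_sub ((hg.intervalIntegrable _ _).add
          (hg_neg.intervalIntegrable _ _)) intervalIntegrable_const,
        intervalIntegral.integral_add (hg.intervalIntegrable _ _) (hg_neg.intervalIntegrable _ _),
        hhalves, intervalIntegral.integral_const, smul_eq_mul]
      ring

end LogIntegral

/-- Log transform of `1/√(1-t²)`:
`ℒ[1/√(1-t²)](z) = -log|J₊⁻¹(z)| - log 2` for `z ∈ ℂ∖[-1,1]`. -/
theorem log_transform_inv_sqrt (z : ℂ)
    (hz : z ∉ Complex.ofReal '' Set.Icc (-1 : ℝ) 1) :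
    ((1 / Real.pi) *
        ∫ t in (-1 : ℝ)..1, Real.log ‖(t : ℂ) - z‖ / Real.sqrt (1 - t ^ 2))
      = -Real.log ‖Jinv z‖ - Real.log 2 := by
  rw [integral_div_sqrt_one_sub_sq_eq_integral_comp_cos,
    integral_log_norm_cos_sub_joukowsky (Jinv_ne_zero z) (norm_Jinv_lt_one hz) (Jinv_add_inv z)]
  field_simp
  ring
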